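/- Let G be a discrete group, N ⊴ G, B a *-algebra with G-action α. Define Φ on generators of the balanced tensor product (X_e^G(B)⋊N) ⊗ conj(X_N^G(B)) by Φ((a, r, n) ⊗ conj(b, s)) = (a α_{r n s⁻¹}(b*), r n s⁻¹, s n⁻¹), landing in Mansfield's bimodule Y_{G/N}^G(B⋊G) for the dual grading on B⋊G (generator of Y: ((c, v), w) with (c,v) ∈ B⋊G of degree v and w ∈ G, written (c, v, w)). Then Φ preserves the left B⋊G⋊G⋊N-module action and the right (B⋊G)⋊(G/N)-valued inner product on generators. -/
import Mathlib


/-!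
Statement 14 (the key computation in Theorem 4.1 of Kaliszewski–Quigg): for a
discrete group `G`, `N ⊴ G`, and an action `α` of `G` on a *-algebra `B` by
*-automorphisms, the map `Φ` defined on generators of the balanced tensor
product `(X_e^G(B) ⋊ N) ⊗_{B ⋊ N} conj(X_N^G(B))` by
`Φ((a, r, n) ⊗ conj(b, s)) = (a α_{r n s⁻¹}(b*), r n s⁻¹, s n⁻¹)`,
with values in Mansfield's bimodule `Y_{G/N}^G(B ⋊ G)` for the dual grading on
`B ⋊ G` (generators `((c, v), w)`, modelled in `(G × G) →₀ B`), preserves the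
left `B ⋊ G ⋊ G ⋊ N`-module action and the right `(B ⋊ G) ⋊ (G/N)`-valued inner
product on generators.
-/

attribute [local instance] Classical.propDecidable

noncomputable section

variable {G : Type*} [Group G] {B : Type*} [Ring B] [Algebra ℂ B] [StarRing B]
  [StarModule ℂ B] {N : Subgroup G} [hN : N.Normal]

variable (α : G →* (B ≃ₐ[ℂ] B))

/-- Left action of the generator `(a, r, s, n)` of `B ⋊ G ⋊ G ⋊ N` on the
generator `(b, t, m)` of `X_e^G(B) ⋊ N`:
`= (a α_r(b), r t n⁻¹, n m)` if `s = t n⁻¹`, else `0`. -/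
def cActXN (a : B) (r s : G) (n : N) (b : B) (t : G) (m : N) : (G × N) →₀ B :=
  if s = t * ((n : G))⁻¹ then
    Finsupp.single (r * t * ((n : G))⁻¹, n * m) (a * α r b)
  else 0

/-- The `B ⋊ N`-valued right inner product on `X_e^G(B) ⋊ N`, on generators:
`⟨(b,t,n),(c,u,m)⟩ = (α_{n⁻¹}(α_{t⁻¹}(b* c)), n⁻¹ m)` if `t = u`, else `0`. -/
def xnInner (b : B) (t : G) (n : N) (c : B) (u : G) (m : N) : N →₀ B :=
  if t = u then
    Finsupp.single (n⁻¹ * m) (α ((n : G))⁻¹ (α t⁻¹ (star b * c)))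
  else 0

/-- `Φ` on generators:
`Φ((a, r, n) ⊗ conj(b, s)) = ((a α_{r n s⁻¹}(b*), r n s⁻¹), s n⁻¹)`. -/
def Phi14 (a : B) (r : G) (n : N) (b : B) (s : G) : (G × G) →₀ B :=
  Finsupp.single (r * (n : G) * s⁻¹, s * ((n : G))⁻¹)
    (a * α (r * (n : G) * s⁻¹) (star b))

/-- `Φ` extended linearly in the first (crossed-product Green) leg. -/
def Phi14Lift (x : (G × N) →₀ B) (b : B) (s : G) : (G × G) →₀ B :=
  x.sum fun p y => Phi14 α y p.1 p.2 b s

/-- Left action of the generator `(a, r, s, n)` of `B ⋊ G ⋊ G ⋊ N` on the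
generator `((b, t), u)` of the Mansfield bimodule `Y_{G/N}^G(B ⋊ G)`:
`= ((a α_r(b), r t), u n⁻¹)` if `s n = t u`, else `0`. -/
def cActYdual (a : B) (r s : G) (n : N) (b : B) (t u : G) : (G × G) →₀ B :=
  if s * (n : G) = t * u then
    Finsupp.single (r * t, u * ((n : G))⁻¹) (a * α r b)
  else 0

/-- `cActYdual` extended linearly over `Y_{G/N}^G(B ⋊ G)`. -/
def cActYdualLift (a : B) (r s : G) (n : N) (y : (G × G) →₀ B) : (G × G) →₀ B :=
  y.sum fun q x => cActYdual α a r s n x q.1 q.2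

/-- The `(B ⋊ G) ⋊ (G/N)`-valued right inner product on `Y_{G/N}^G(B ⋊ G)`, on
generators: `⟨((b,v),w),((c,v'),w')⟩ = ((α_{v⁻¹}(b* c), v⁻¹ v'), w'N)` if
`v w = v' w'`, else `0`. -/
def ydualInner (b : B) (v w : G) (c : B) (v' w' : G) : (G × G ⧸ N) →₀ B :=
  if v * w = v' * w' then
    Finsupp.single (v⁻¹ * v', (w' : G ⧸ N)) (α v⁻¹ (star b * c))
  else 0

/-- `ydualInner` extended bilinearly. -/
def ydualInnerLift (y y' : (G × G) →₀ B) : (G × G ⧸ N) →₀ B :=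
  y.sum fun p b => y'.sum fun q c => ydualInner α b p.1 p.2 c q.1 q.2

/-- Involution on `B ⋊ N`: `(b, n)* = (α_{n⁻¹}(b*), n⁻¹)`, extended linearly. -/
def bnStar (f : N →₀ B) : N →₀ B :=
  f.sum fun n b => Finsupp.single n⁻¹ (α ((n : G))⁻¹ (star b))

/-- The right action of an element of `B ⋊ N` on the generator `(b, s)` of
Green's bimodule `X_N^G(B)`: on algebra generators,
`(b, s)·(c, n) = (b α_s(c), s n)`. -/
def zActR (b : B) (s : G) (ρ : N →₀ B) : G →₀ B :=
  ρ.sum fun n c => Finsupp.single (s * (n : G)) (b * α s c)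

/-- The `B ⋊ G ⋊ (G/N)`-valued left inner product on Green's bimodule
`X_N^G(B)`, with first entry the generator `(b, s)`, extended linearly in the
second entry: on generators,
`⟨(b,s),(c,t)⟩ = (b α_{s t⁻¹}(c*), s t⁻¹, tN)`. -/
def glInnerLift (b : B) (s : G) (z : G →₀ B) : (G × G ⧸ N) →₀ B :=
  z.sum fun t c =>
    Finsupp.single (s * t⁻¹, (t : G ⧸ N)) (b * α (s * t⁻¹) (star c))

omit [StarRing B] [StarModule ℂ B] hN in
/-- Composition rule for the action. -/
lemma alphaComp (x y : G) (b : B) : α x (α y b) = α (x * y) b := by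
  rw [map_mul]; rfl

omit [StarRing B] [StarModule ℂ B] hN in
/-- `α g` is multiplicative on `B`. -/
lemma alphaMulB (g : G) (x y : B) : α g (x * y) = α g x * α g y :=
  map_mul (α g) x y

omit [StarModule ℂ B] hN in
lemma Phi14_zero (r : G) (n : N) (b : B) (s : G) : Phi14 α 0 r n b s = 0 := by
  simp [Phi14]

omit [StarRing B] [StarModule ℂ B] hN in
lemma cActYdual_zero (a : B) (r s : G) (n : N) (t u : G) :
    cActYdual α a r s n 0 t u = 0 := by
  simp [cActYdual]

/-- `Φ` preserves the left `B ⋊ G ⋊ G ⋊ N`-action and the right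
`(B ⋊ G) ⋊ (G/N)`-valued inner product on generators; the inner product of
tensors is `⟨x ⊗ conj z, x' ⊗ conj z'⟩ = ⟨z, z' · (⟨x, x'⟩_{B ⋊ N})*⟩_L`. -/
theorem dual_triangle_bimodule_map
    (hαstar : ∀ (s : G) (b : B), α s (star b) = star (α s b)) :
    -- `Φ` intertwines the left actions:
    (∀ (a : B) (r s : G) (n : N) (b' : B) (t : G) (m : N) (bz : B) (sz : G),
      Phi14Lift α (cActXN α a r s n b' t m) bz sz =
        cActYdualLift α a r s n (Phi14 α b' t m bz sz)) ∧
    -- `Φ` preserves the right inner products: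
    (∀ (a₁ : B) (r₁ : G) (n₁ : N) (b₁ : B) (s₁ : G)
        (a₂ : B) (r₂ : G) (n₂ : N) (b₂ : B) (s₂ : G),
      ydualInnerLift α (Phi14 α a₁ r₁ n₁ b₁ s₁) (Phi14 α a₂ r₂ n₂ b₂ s₂) =
        glInnerLift (N := N) α b₁ s₁
          (zActR α b₂ s₂ (bnStar α (xnInner α a₁ r₁ n₁ a₂ r₂ n₂)))) := by
  constructor
  · intro a r s n b' t m bz sz
    unfold Phi14Lift cActXN cActYdualLift
    by_cases h : s = t * ((n : G))⁻¹
    · rw [if_pos h]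
      rw [Finsupp.sum_single_index (by simp [Phi14_zero])]
      unfold Phi14
      rw [Finsupp.sum_single_index (by simp [cActYdual_zero])]
      unfold cActYdual
      rw [if_pos (by subst h; group)]
      congr 1
      · subst h
        simp only [Subgroup.coe_mul, mul_inv_rev, mul_assoc,
          mul_inv_cancel_left, inv_mul_cancel_left]
      · simp only [alphaMulB, alphaComp, mul_assoc, Subgroup.coe_mul,
          mul_inv_cancel_left, inv_mul_cancel_left]
    · rw [if_neg h]
      rw [Finsupp.sum_zero_index]
      unfold Phi14
      rw [Finsupp.sum_single_index (by simp [cActYdual_zero])]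
      unfold cActYdual
      dsimp only
      rw [if_neg]
      intro hc
      apply h
      have h2 : s * (n : G) = t := by rw [hc]; group
      rw [← h2]; group
  · intro a₁ r₁ n₁ b₁ s₁ a₂ r₂ n₂ b₂ s₂
    unfold ydualInnerLift Phi14 xnInner
    rw [Finsupp.sum_single_index (by simp [ydualInner])]
    rw [Finsupp.sum_single_index (by simp [ydualInner])]
    unfold ydualInner
    have e1 : r₁ * (↑n₁) * s₁⁻¹ * (s₁ * ((n₁ : G))⁻¹) = r₁ := by group
    have e2 : r₂ * (↑n₂) * s₂⁻¹ * (s₂ * ((n₂ : G))⁻¹) = r₂ := by group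
    rw [e1, e2]
    by_cases hr : r₁ = r₂
    · subst hr
      rw [if_pos rfl, if_pos rfl]
      unfold bnStar zActR glInnerLift
      rw [Finsupp.sum_single_index (by simp)]
      rw [Finsupp.sum_single_index (by simp)]
      rw [Finsupp.sum_single_index (by simp)]
      congr 1
      · congr 1
        · simp only [Subgroup.coe_mul, InvMemClass.coe_inv, mul_inv_rev,
            mul_assoc, inv_inv, mul_inv_cancel_left, inv_mul_cancel_left]
        · rw [QuotientGroup.mk_mul_of_mem s₂ (by exact (n₂⁻¹ : N).2),
            QuotientGroup.mk_mul_of_mem s₂ ((n₁⁻¹ * n₂ : N)⁻¹).2]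
      · simp only [star_mul, star_star, ← hαstar, alphaMulB, alphaComp,
          Subgroup.coe_mul, InvMemClass.coe_inv, mul_inv_rev, inv_inv,
          mul_assoc, mul_inv_cancel_left, inv_mul_cancel_left,
          mul_inv_cancel, inv_mul_cancel, map_one, AlgEquiv.one_apply,
          one_mul, mul_one]
    · rw [if_neg hr, if_neg hr]
      simp [bnStar, zActR, glInnerLift]

end
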